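/- arXiv:2505.10024 — 3 statements merged into one kernel-verified Lean document; each statement's English description precedes it below -/
import Mathlib

section
/- Fix n ≥ 1, a label y ∈ {−1, +1}, w ∈ ℝⁿ, b ∈ ℝ and ξ ≥ 0. Let μ ∈ ℝⁿ, let Σ ∈ ℝ^{n×n} be symmetric positive definite, let γ₁, γ₂ ≥ 0, let Y_1,…,Y_m ⊆ ℝⁿ be core sets with exponents p_j and weights θ_j > 0, and let D be the associated ambiguity set. Suppose Λ ∈ ℝ^{n×n} is symmetric positive semidefinite, q ∈ ℝⁿ, t ∈ ℝ and r ≥ 0 satisfy, for every x ∈ ℝⁿ, the pointwise majorization 𝟙[y(wᵀx + b) ≤ 1 − ξ] ≤ xᵀΛx + qᵀx + t + r · min_{1≤j≤m} θ_j min_{x'∈Y_j} ‖x − x'‖_{p_j}. Then for every F ∈ D, F({x ∈ ℝⁿ : y(wᵀx + b) ≤ 1 − ξ}) ≤ t + tr(Λ(γ₂Σ + μμᵀ)) + √γ₁ ‖Σ^{1/2}(q + 2Λμ)‖₂ + qᵀμ + r. -/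
open Matrix MeasureTheory ENNReal

noncomputable section

/-- The `p`-norm on `ι → ℝ` for an extended-real exponent `p ∈ [1,∞]`. -/
def pNormE {ι : Type*} [Fintype ι] (p : ℝ≥0∞) (x : ι → ℝ) : ℝ :=
  if p = ∞ then ⨆ i, |x i| else (∑ i, |x i| ^ p.toReal) ^ (1 / p.toReal)

/-- A core set `{x̂ + Aζ : ‖ζ‖_p ≤ √γ̄}`. -/
def coreSetE {n : ℕ} (xhat : Fin n → ℝ) (A : Matrix (Fin n) (Fin n) ℝ)
    (γbar : ℝ) (p : ℝ≥0∞) : Set (Fin n → ℝ) :=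
  {x | ∃ ζ : Fin n → ℝ, pNormE p ζ ≤ Real.sqrt γbar ∧ x = xhat + A.mulVec ζ}

/-- The `p`-distance `min_{x'∈Y} ‖x − x'‖_p` from `x` to a set `Y`. -/
def distToSet {n : ℕ} (p : ℝ≥0∞) (Y : Set (Fin n → ℝ)) (x : Fin n → ℝ) : ℝ :=
  sInf ((fun x' => pNormE p (x - x')) '' Y)

/-- The core-set penalty `min_{1≤j≤m} θ_j min_{x'∈Y_j} ‖x − x'‖_{p_j}`. -/
def corePenalty {n m : ℕ} (θ : Fin m → ℝ) (p : Fin m → ℝ≥0∞)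
    (Y : Fin m → Set (Fin n → ℝ)) (x : Fin n → ℝ) : ℝ :=
  ⨅ j, θ j * distToSet (p j) (Y j) x

/-- The positive semidefinite square root of a positive semidefinite matrix, spelled out as
`Matrix.PosSemidef.sqrt` was defined in the older Mathlib. -/
def psdSqrtE {n : Type*} [Fintype n] [DecidableEq n] {A : Matrix n n ℝ} (hA : A.PosSemidef) :
    Matrix n n ℝ :=
  hA.1.eigenvectorUnitary.1 * diagonal ((↑) ∘ (√·) ∘ hA.1.eigenvalues) *
    (star hA.1.eigenvectorUnitary : Matrix n n ℝ)

/-- Membership in the moment- and core-set-based ambiguity set `D`: `F` is a Borel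
probability measure with finite second moments whose mean lies in the
`γ₁`-confidence ellipsoid around `μ`, whose centered second moment is dominated by
`γ₂Σ`, and whose expected core-set penalty is at most `1`. -/
def memAmb {n m : ℕ} (μ : Fin n → ℝ) (Sig : Matrix (Fin n) (Fin n) ℝ)
    (γ1 γ2 : ℝ) (θ : Fin m → ℝ) (p : Fin m → ℝ≥0∞)
    (Y : Fin m → Set (Fin n → ℝ)) (F : Measure (Fin n → ℝ)) : Prop :=
  IsProbabilityMeasure F ∧
  (∀ i, Integrable (fun x => x i) F) ∧
  (∀ i j, Integrable (fun x => x i * x j) F) ∧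
  ((fun i => ∫ x, x i ∂F) - μ) ⬝ᵥ Sig⁻¹.mulVec ((fun i => ∫ x, x i ∂F) - μ) ≤ γ1 ∧
  (γ2 • Sig - Matrix.of fun i j => ∫ x, (x i - μ i) * (x j - μ j) ∂F).PosSemidef ∧
  ∫⁻ x, ENNReal.ofReal (corePenalty θ p Y x) ∂F ≤ 1

/-! Integrating the majorization against `F` bounds `F(S)` by `E_F[xᵀΛx + qᵀx] + t + r`: the
penalty term contributes at most `r` because its expectation is at most `1`. Centering at `μ`
gives `E_F[xᵀΛx + qᵀx] = tr(ΛC) + (q + 2Λμ)ᵀ(m − μ) + μᵀΛμ + qᵀμ`, where `m` is the mean and `C`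
the centered second moment of `F`. Since `Λ` and `γ₂Σ − C` are positive semidefinite,
`tr(ΛC) ≤ tr(Λγ₂Σ)`; writing `m − μ = Σ^{1/2}e`, Cauchy–Schwarz bounds the linear term by
`‖Σ^{1/2}(q + 2Λμ)‖₂‖e‖₂`, and `‖e‖₂² = (m − μ)ᵀΣ⁻¹(m − μ) ≤ γ₁`. -/

section Vectors

variable {ι : Type*} [Fintype ι]

lemma pNormE_two_eq_sqrt_dotProduct (u : ι → ℝ) : pNormE 2 u = √(u ⬝ᵥ u) := by
  rw [pNormE, if_neg ENNReal.ofNat_ne_top, Real.sqrt_eq_rpow, ENNReal.toReal_ofNat]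
  congr 1
  refine Finset.sum_congr rfl fun i _ => ?_
  rw [Real.rpow_two, sq_abs, sq]

lemma pNormE_two_nonneg (u : ι → ℝ) : 0 ≤ pNormE 2 u := by
  rw [pNormE_two_eq_sqrt_dotProduct]
  exact Real.sqrt_nonneg _

lemma dotProduct_mulVec_self_eq_sum (Λ : Matrix ι ι ℝ) (z : ι → ℝ) :
    z ⬝ᵥ Λ *ᵥ z = ∑ i, ∑ j, Λ i j * (z i * z j) := by
  simp only [dotProduct, mulVec, Finset.mul_sum]
  exact Finset.sum_congr rfl fun i _ => Finset.sum_congr rfl fun j _ => by ring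

lemma Matrix.IsSymm.dotProduct_mulVec_comm {Λ : Matrix ι ι ℝ} (hΛ : Λ.IsSymm) (v w : ι → ℝ) :
    v ⬝ᵥ Λ *ᵥ w = w ⬝ᵥ Λ *ᵥ v := by
  rw [dotProduct_mulVec, ← mulVec_transpose, hΛ.eq, dotProduct_comm]

lemma Matrix.IsSymm.dotProduct_mulVec_add_dotProduct_eq {Λ : Matrix ι ι ℝ} (hΛ : Λ.IsSymm)
    (q μ x : ι → ℝ) :
    x ⬝ᵥ Λ *ᵥ x + q ⬝ᵥ x =
      (x - μ) ⬝ᵥ Λ *ᵥ (x - μ) + (q + (2 : ℝ) • Λ *ᵥ μ) ⬝ᵥ (x - μ) + μ ⬝ᵥ Λ *ᵥ μ + q ⬝ᵥ μ := by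
  conv_lhs => rw [← sub_add_cancel x μ]
  simp only [mulVec_add, add_dotProduct, dotProduct_add, smul_dotProduct, smul_eq_mul,
    hΛ.dotProduct_mulVec_comm μ, dotProduct_comm (Λ *ᵥ μ)]
  ring

end Vectors

section Sqrt

variable {ι : Type*} [Fintype ι] [DecidableEq ι]

lemma psdSqrtE_mul_self {A : Matrix ι ι ℝ} (hA : A.PosSemidef) :
    psdSqrtE hA * psdSqrtE hA = A := by
  have hU : (star hA.1.eigenvectorUnitary : Matrix ι ι ℝ) * hA.1.eigenvectorUnitary = 1 :=
    Unitary.coe_star_mul_self _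
  have hD : diagonal ((↑) ∘ (√·) ∘ hA.1.eigenvalues) * diagonal ((↑) ∘ (√·) ∘ hA.1.eigenvalues)
      = diagonal (RCLike.ofReal ∘ hA.1.eigenvalues : ι → ℝ) := by
    rw [diagonal_mul_diagonal]
    congr 1
    funext i
    simp [Real.mul_self_sqrt (hA.eigenvalues_nonneg i)]
  conv_rhs => rw [hA.1.spectral_theorem, Unitary.conjStarAlgAut_apply]
  simp only [psdSqrtE, Matrix.mul_assoc]
  rw [← Matrix.mul_assoc (star _ : Matrix ι ι ℝ), hU, Matrix.one_mul,
    ← Matrix.mul_assoc _ _ (star _), hD]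

lemma isSymm_psdSqrtE {A : Matrix ι ι ℝ} (hA : A.PosSemidef) : (psdSqrtE hA).IsSymm := by
  rw [← isHermitian_iff_isSymm, IsHermitian]
  simp [psdSqrtE, Matrix.mul_assoc, star_eq_conjTranspose]

lemma Matrix.PosSemidef.trace_mul_nonneg {A B : Matrix ι ι ℝ} (hA : A.PosSemidef)
    (hB : B.PosSemidef) : 0 ≤ (A * B).trace := by
  set S := psdSqrtE hA
  have hSBS : (S * B * S).PosSemidef := by
    have h := hB.mul_mul_conjTranspose_same S
    rwa [conjTranspose_eq_transpose_of_trivial, (isSymm_psdSqrtE hA).eq] at h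
  calc 0 ≤ (S * B * S).trace := hSBS.trace_nonneg
    _ = (A * B).trace := by
      rw [Matrix.mul_assoc, trace_mul_comm, Matrix.mul_assoc, psdSqrtE_mul_self, trace_mul_comm]

lemma Matrix.PosSemidef.trace_mul_le_trace_mul {A B C : Matrix ι ι ℝ} (hA : A.PosSemidef)
    (hBC : (B - C).PosSemidef) : (A * C).trace ≤ (A * B).trace := by
  have := hA.trace_mul_nonneg hBC
  rw [Matrix.mul_sub, trace_sub] at this
  linarith

lemma dotProduct_le_sqrt_mul_pNormE_psdSqrtE {Sig : Matrix ι ι ℝ} (hSig : Sig.PosDef)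
    (v d : ι → ℝ) :
    v ⬝ᵥ d ≤ √(d ⬝ᵥ Sig⁻¹ *ᵥ d) * pNormE 2 (psdSqrtE hSig.posSemidef *ᵥ v) := by
  set S := psdSqrtE hSig.posSemidef
  have hSS : S * S = Sig := psdSqrtE_mul_self _
  have hS : S.IsSymm := isSymm_psdSqrtE _
  have hdet : IsUnit S.det := by
    refine isUnit_of_mul_isUnit_left (y := S.det) ?_
    rw [← det_mul, hSS]
    exact hSig.det_pos.ne'.isUnit
  set e := S⁻¹ *ᵥ d with he_def
  have hSe : S *ᵥ e = d := by rw [he_def, mulVec_mulVec, mul_nonsing_inv _ hdet, one_mulVec]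
  have hv : v ⬝ᵥ d = S *ᵥ v ⬝ᵥ e := by
    rw [← hSe, hS.dotProduct_mulVec_comm, dotProduct_comm]
  have he : e ⬝ᵥ e = d ⬝ᵥ Sig⁻¹ *ᵥ d := by
    rw [dotProduct_mulVec, ← mulVec_transpose, transpose_nonsing_inv, hS.eq, mulVec_mulVec,
      ← Matrix.mul_inv_rev, hSS, dotProduct_comm]
  rw [hv, ← he, pNormE_two_eq_sqrt_dotProduct, mul_comm]
  simpa only [dotProduct, sq] using Real.sum_mul_le_sqrt_mul_sqrt Finset.univ (S *ᵥ v) e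

end Sqrt

section Moments

variable {α : Type*} [MeasurableSpace α] {ν : Measure α}

lemma ofReal_integral_le_lintegral_ofReal {f : α → ℝ} (hf : Integrable f ν) :
    ENNReal.ofReal (∫ x, f x ∂ν) ≤ ∫⁻ x, ENNReal.ofReal (f x) ∂ν :=
  calc ENNReal.ofReal (∫ x, f x ∂ν) ≤ ENNReal.ofReal (∫ x, max (f x) 0 ∂ν) :=
        ENNReal.ofReal_le_ofReal (integral_mono hf hf.pos_part fun x => le_max_left _ _)
    _ = ∫⁻ x, ENNReal.ofReal (max (f x) 0) ∂ν :=
        ofReal_integral_eq_lintegral_ofReal hf.pos_part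
          (Filter.Eventually.of_forall fun x => le_max_right _ _)
    _ = ∫⁻ x, ENNReal.ofReal (f x) ∂ν := by
        simp only [ENNReal.ofReal_max, ENNReal.ofReal_zero, max_zero]

lemma integral_le_integral_add_of_le_add_mul {f g c : α → ℝ} {r : ℝ} (hf : Integrable f ν)
    (hg : Integrable g ν) (hr : 0 ≤ r) (hfg : ∀ x, f x ≤ g x + r * c x)
    (hc : ∫⁻ x, ENNReal.ofReal (c x) ∂ν ≤ 1) : ∫ x, f x ∂ν ≤ ∫ x, g x ∂ν + r := by
  have h : ENNReal.ofReal (∫ x, f x - g x ∂ν) ≤ ENNReal.ofReal r :=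
    calc ENNReal.ofReal (∫ x, f x - g x ∂ν) ≤ ∫⁻ x, ENNReal.ofReal (f x - g x) ∂ν :=
          ofReal_integral_le_lintegral_ofReal (hf.sub hg)
      _ ≤ ∫⁻ x, ENNReal.ofReal r * ENNReal.ofReal (c x) ∂ν := by
          refine lintegral_mono fun x => ?_
          rw [← ENNReal.ofReal_mul hr]
          exact ENNReal.ofReal_le_ofReal (by linarith [hfg x])
      _ = ENNReal.ofReal r * ∫⁻ x, ENNReal.ofReal (c x) ∂ν :=
          lintegral_const_mul' _ _ ENNReal.ofReal_ne_top
      _ ≤ ENNReal.ofReal r := mul_le_of_le_one_right' hc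
  rw [ENNReal.ofReal_le_ofReal_iff hr, integral_sub hf hg] at h
  linarith

lemma measureReal_le_integral_add_of_ite_le [IsFiniteMeasure ν] {P : α → Prop} [DecidablePred P]
    {g c : α → ℝ} {r : ℝ} (hP : MeasurableSet {x | P x}) (hg : Integrable g ν) (hr : 0 ≤ r)
    (hPg : ∀ x, (if P x then (1 : ℝ) else 0) ≤ g x + r * c x)
    (hc : ∫⁻ x, ENNReal.ofReal (c x) ∂ν ≤ 1) : ν.real {x | P x} ≤ ∫ x, g x ∂ν + r := by
  have hind : (fun x => if P x then (1 : ℝ) else 0) = {x | P x}.indicator 1 := by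
    funext x
    simp only [Set.indicator_apply, Set.mem_ofPred_eq, Pi.one_apply]
  have hPi : Integrable (fun x => if P x then (1 : ℝ) else 0) ν := by
    rw [hind]
    exact (integrable_const 1).indicator hP
  rw [← integral_indicator_one hP, ← hind]
  exact integral_le_integral_add_of_le_add_mul hPi hg hr hPg hc

variable {ι : Type*} [Fintype ι] {u : α → ι → ℝ}

lemma integrable_dotProduct (v : ι → ℝ) (hu : ∀ i, Integrable (fun x => u x i) ν) :
    Integrable (fun x => v ⬝ᵥ u x) ν :=
  integrable_finsetSum _ fun i _ => (hu i).const_mul (v i)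

lemma integral_dotProduct (v : ι → ℝ) (hu : ∀ i, Integrable (fun x => u x i) ν) :
    ∫ x, v ⬝ᵥ u x ∂ν = v ⬝ᵥ fun i => ∫ x, u x i ∂ν := by
  simp only [dotProduct]
  rw [integral_finsetSum _ fun i _ => (hu i).const_mul (v i)]
  simp only [integral_const_mul]

lemma integrable_dotProduct_mulVec_self (Λ : Matrix ι ι ℝ)
    (hu : ∀ i j, Integrable (fun x => u x i * u x j) ν) :
    Integrable (fun x => u x ⬝ᵥ Λ *ᵥ u x) ν := by
  simp only [dotProduct_mulVec_self_eq_sum]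
  exact integrable_finsetSum _ fun i _ => integrable_finsetSum _ fun j _ =>
    (hu i j).const_mul (Λ i j)

lemma integral_dotProduct_mulVec_self (Λ : Matrix ι ι ℝ)
    (hu : ∀ i j, Integrable (fun x => u x i * u x j) ν) :
    ∫ x, u x ⬝ᵥ Λ *ᵥ u x ∂ν = (Λ * of fun i j => ∫ x, u x i * u x j ∂ν).trace := by
  simp only [dotProduct_mulVec_self_eq_sum, trace, diag_apply, mul_apply]
  rw [integral_finsetSum _ fun i _ =>
    integrable_finsetSum _ fun j _ => (hu i j).const_mul (Λ i j)]
  refine Finset.sum_congr rfl fun i _ => ?_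
  rw [integral_finsetSum _ fun j _ => (hu i j).const_mul (Λ i j)]
  refine Finset.sum_congr rfl fun j _ => ?_
  rw [integral_const_mul, of_apply]
  simp only [mul_comm (u _ j)]

variable {F : Measure (ι → ℝ)}

omit [Fintype ι] in
lemma integrable_sub_mul_sub [IsFiniteMeasure F] (hI1 : ∀ i, Integrable (fun x => x i) F)
    (hI2 : ∀ i j, Integrable (fun x => x i * x j) F) (μ : ι → ℝ) (i j : ι) :
    Integrable (fun x => (x i - μ i) * (x j - μ j)) F := by
  have h : (fun x : ι → ℝ => (x i - μ i) * (x j - μ j))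
      = fun x => x i * x j - μ j * x i - μ i * x j + μ i * μ j := funext fun x => by ring
  rw [h]
  exact (((hI2 i j).sub ((hI1 i).const_mul _)).sub ((hI1 j).const_mul _)).add (integrable_const _)

lemma integral_quadratic_eq_centered [IsProbabilityMeasure F] {Λ : Matrix ι ι ℝ} (hΛ : Λ.IsSymm)
    (q μ : ι → ℝ) (t : ℝ) (hI1 : ∀ i, Integrable (fun x => x i) F)
    (hI2 : ∀ i j, Integrable (fun x => x i * x j) F) :
    ∫ x, x ⬝ᵥ Λ *ᵥ x + q ⬝ᵥ x + t ∂F =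
      (Λ * of fun i j => ∫ x, (x i - μ i) * (x j - μ j) ∂F).trace
        + (q + (2 : ℝ) • Λ *ᵥ μ) ⬝ᵥ ((fun i => ∫ x, x i ∂F) - μ) + μ ⬝ᵥ Λ *ᵥ μ + q ⬝ᵥ μ + t := by
  have hc : ∀ i, Integrable (fun x : ι → ℝ => (x - μ) i) F :=
    fun i => (hI1 i).sub (integrable_const _)
  have hquad : Integrable (fun x : ι → ℝ => (x - μ) ⬝ᵥ Λ *ᵥ (x - μ)) F :=
    integrable_dotProduct_mulVec_self Λ (integrable_sub_mul_sub hI1 hI2 μ)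
  have hlin : Integrable (fun x : ι → ℝ => (q + (2 : ℝ) • Λ *ᵥ μ) ⬝ᵥ (x - μ)) F :=
    integrable_dotProduct _ hc
  have hmean : (fun i => ∫ x : ι → ℝ, (x - μ) i ∂F) = (fun i => ∫ x, x i ∂F) - μ := by
    funext i
    simp [integral_sub (hI1 i) (integrable_const _)]
  simp only [hΛ.dotProduct_mulVec_add_dotProduct_eq q μ]
  rw [integral_add (by fun_prop) (by fun_prop), integral_add (by fun_prop) (by fun_prop),
    integral_add (by fun_prop) (by fun_prop), integral_add hquad hlin,
    integral_dotProduct_mulVec_self (u := fun x => x - μ) Λ (integrable_sub_mul_sub hI1 hI2 μ),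
    integral_dotProduct _ hc, hmean]
  simp

end Moments

theorem chance_bound_from_majorization_general {n m : ℕ}
    (y : ℝ) (w : Fin n → ℝ) (b ξ : ℝ)
    (μ : Fin n → ℝ) (Sig : Matrix (Fin n) (Fin n) ℝ) (hSig : Sig.PosDef)
    (γ1 γ2 : ℝ)
    (xhat : Fin m → Fin n → ℝ) (A : Fin m → Matrix (Fin n) (Fin n) ℝ)
    (γbar : Fin m → ℝ)
    (p : Fin m → ℝ≥0∞)
    (θ : Fin m → ℝ)
    (Λ : Matrix (Fin n) (Fin n) ℝ) (hΛ : Λ.PosSemidef)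
    (q : Fin n → ℝ) (t r : ℝ) (hr : 0 ≤ r)
    (hmaj : ∀ x : Fin n → ℝ,
      (if y * (w ⬝ᵥ x + b) ≤ 1 - ξ then (1 : ℝ) else 0) ≤
        x ⬝ᵥ Λ.mulVec x + q ⬝ᵥ x + t
          + r * corePenalty θ p (fun j => coreSetE (xhat j) (A j) (γbar j) (p j)) x) :
    ∀ F : Measure (Fin n → ℝ),
      memAmb μ Sig γ1 γ2 θ p (fun j => coreSetE (xhat j) (A j) (γbar j) (p j)) F →
      (F {x | y * (w ⬝ᵥ x + b) ≤ 1 - ξ}).toReal ≤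
        t + (Λ * (γ2 • Sig + Matrix.vecMulVec μ μ)).trace
          + Real.sqrt γ1 * pNormE 2 ((psdSqrtE hSig.posSemidef).mulVec (q + (2 : ℝ) • Λ.mulVec μ))
          + q ⬝ᵥ μ + r := by
  rintro F ⟨hF, hI1, hI2, hmean, hcov, hpen⟩
  have hquad : Integrable (fun x => x ⬝ᵥ Λ *ᵥ x + q ⬝ᵥ x + t) F :=
    ((integrable_dotProduct_mulVec_self Λ hI2).add (integrable_dotProduct q hI1)).add
      (integrable_const t)
  have hmarkov := measureReal_le_integral_add_of_ite_le
    (measurableSet_le (by fun_prop) measurable_const) hquad hr hmaj hpen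
  rw [integral_quadratic_eq_centered (isHermitian_iff_isSymm.mp hΛ.isHermitian) q μ t hI1 hI2]
    at hmarkov
  have htrace := hΛ.trace_mul_le_trace_mul hcov
  have hcs := (dotProduct_le_sqrt_mul_pNormE_psdSqrtE hSig (q + (2 : ℝ) • Λ *ᵥ μ)
    ((fun i => ∫ x, x i ∂F) - μ)).trans
      (mul_le_mul_of_nonneg_right (Real.sqrt_le_sqrt hmean) (pNormE_two_nonneg _))
  rw [Matrix.mul_add, trace_add, mul_vecMulVec, trace_vecMulVec, dotProduct_comm (Λ *ᵥ μ)]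
  exact hmarkov.trans (by linarith)

/-- If `Λ ⪰ 0`, `q`, `t`, `r ≥ 0` pointwise majorize the indicator:
`𝟙[y(wᵀx+b) ≤ 1−ξ] ≤ xᵀΛx + qᵀx + t + r·min_j θ_j min_{x'∈Y_j}‖x − x'‖_{p_j}` for all
`x`, then every `F` in the ambiguity set `D` satisfies
`F({x : y(wᵀx+b) ≤ 1−ξ}) ≤ t + tr(Λ(γ₂Σ + μμᵀ)) + √γ₁‖Σ^{1/2}(q + 2Λμ)‖₂ + qᵀμ + r`. -/
theorem chance_bound_from_majorization {n m : ℕ} (hn : 1 ≤ n) (hm : 1 ≤ m)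
    (y : ℝ) (hy : y = 1 ∨ y = -1) (w : Fin n → ℝ) (b ξ : ℝ) (hξ : 0 ≤ ξ)
    (μ : Fin n → ℝ) (Sig : Matrix (Fin n) (Fin n) ℝ) (hSig : Sig.PosDef)
    (γ1 γ2 : ℝ) (hγ1 : 0 ≤ γ1) (hγ2 : 0 ≤ γ2)
    (xhat : Fin m → Fin n → ℝ) (A : Fin m → Matrix (Fin n) (Fin n) ℝ)
    (γbar : Fin m → ℝ) (hγbar : ∀ j, 0 < γbar j)
    (p : Fin m → ℝ≥0∞) (hp : ∀ j, 1 ≤ p j)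
    (θ : Fin m → ℝ) (hθ : ∀ j, 0 < θ j)
    (Λ : Matrix (Fin n) (Fin n) ℝ) (hΛ : Λ.PosSemidef)
    (q : Fin n → ℝ) (t r : ℝ) (hr : 0 ≤ r)
    (hmaj : ∀ x : Fin n → ℝ,
      (if y * (w ⬝ᵥ x + b) ≤ 1 - ξ then (1 : ℝ) else 0) ≤
        x ⬝ᵥ Λ.mulVec x + q ⬝ᵥ x + t
          + r * corePenalty θ p (fun j => coreSetE (xhat j) (A j) (γbar j) (p j)) x) :
    ∀ F : Measure (Fin n → ℝ),
      memAmb μ Sig γ1 γ2 θ p (fun j => coreSetE (xhat j) (A j) (γbar j) (p j)) F →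
      (F {x | y * (w ⬝ᵥ x + b) ≤ 1 - ξ}).toReal ≤
        t + (Λ * (γ2 • Sig + Matrix.vecMulVec μ μ)).trace
          + Real.sqrt γ1 * pNormE 2 ((psdSqrtE hSig.posSemidef).mulVec (q + (2 : ℝ) • Λ.mulVec μ))
          + q ⬝ᵥ μ + r :=
  chance_bound_from_majorization_general y w b ξ μ Sig hSig γ1 γ2 xhat A γbar p θ Λ hΛ q t r hr hmaj
end
end

section
/- Let n ≥ 1, let Λ ∈ ℝ^{n×n} be symmetric, q ∈ ℝⁿ and c ∈ ℝ. Then xᵀΛx + qᵀx + c ≥ 0 for all x ∈ ℝⁿ if and only if the (n+1)×(n+1) symmetric block matrix [Λ, q/2; qᵀ/2, c] is positive semidefinite. -/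
open Matrix MeasureTheory ENNReal

noncomputable section

/-- The symmetric block matrix `[Λ, β; βᵀ, c]`. -/
def blockMx {ι : Type*} (Λ : Matrix ι ι ℝ) (β : ι → ℝ) (c : ℝ) :
    Matrix (ι ⊕ Unit) (ι ⊕ Unit) ℝ :=
  Matrix.fromBlocks Λ (Matrix.of fun i _ => β i) (Matrix.of fun _ j => β j)
    (Matrix.of fun _ _ => c)

/-!
For `z = (x, t)` the quadratic form of `[Λ, q/2; qᵀ/2, c]` is the homogenization
`xᵀΛx + t qᵀx + c t²` of `f(x) = xᵀΛx + qᵀx + c`, so positive semidefiniteness gives `f ≥ 0` at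
`t = 1`. Conversely, for fixed `x` the univariate quadratic `s ↦ f(s x) = a s² + b s + c` is
nonnegative, hence so is its reversal `c t² + b t + a` (both have discriminant `b² - 4ac ≤ 0`),
and that reversal is the block form at `(x, t)`, the case `t = 0` included.
-/

theorem quadratic_reverse_nonneg {K : Type*} [Field K] [LinearOrder K] [IsStrictOrderedRing K]
    {a b c : K} (h : ∀ s : K, 0 ≤ a * (s * s) + b * s + c) (t : K) :
    0 ≤ c * (t * t) + b * t + a := by
  have hdisc : b ^ 2 ≤ 4 * a * c := by
    have := discrim_le_zero h
    rw [discrim] at this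
    linarith
  have hc : 0 ≤ c := by simpa using h 0
  have ha : 0 ≤ a := by
    rcases hc.eq_or_lt with rfl | hc
    · nlinarith [h 1, h (-1)]
    · nlinarith [sq_nonneg b]
  -- `4a (c t² + b t + a) = (2a + b t)² + (4ac - b²) t²`, and `b = 0` when `a = 0`.
  rcases ha.eq_or_lt with rfl | ha
  · have hb : b = 0 := by nlinarith
    subst hb
    nlinarith
  · nlinarith [sq_nonneg (2 * a + b * t), mul_nonneg (sub_nonneg.2 hdisc) (mul_self_nonneg t)]

namespace blockMx

theorem isSymm {ι : Type*} {Λ : Matrix ι ι ℝ} (hΛ : Λ.IsSymm) (β : ι → ℝ) (c : ℝ) :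
    (blockMx Λ β c).IsSymm :=
  hΛ.fromBlocks (by ext; rfl) (by ext; rfl)

theorem sumElim_dotProduct_mulVec_sumElim {ι : Type*} [Fintype ι] (Λ : Matrix ι ι ℝ)
    (β : ι → ℝ) (c : ℝ) (x : ι → ℝ) (t : ℝ) :
    Sum.elim x (fun _ => t) ⬝ᵥ blockMx Λ β c *ᵥ Sum.elim x (fun _ => t)
      = x ⬝ᵥ Λ *ᵥ x + 2 * t * (β ⬝ᵥ x) + c * (t * t) := by
  have hB : (of fun i (_ : Unit) => β i) *ᵥ (fun _ => t) = t • β := by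
    ext i; simp [mulVec, dotProduct, mul_comm]
  have hC : (of fun (_ : Unit) j => β j) *ᵥ x = fun _ => β ⬝ᵥ x := rfl
  have hD : (of fun (_ : Unit) (_ : Unit) => c) *ᵥ (fun _ => t) = fun _ => c * t := by
    ext; simp [mulVec, dotProduct]
  rw [blockMx, fromBlocks_mulVec, sumElim_dotProduct_sumElim]
  simp only [Sum.elim_comp_inl, Sum.elim_comp_inr, hB, hC, hD, dotProduct_add, dotProduct_smul,
    dotProduct_comm x β, smul_eq_mul, dotProduct_pUnit]
  ring

end blockMx

theorem quadratic_nonneg_iff_blockMatrix_posSemidef_general {n : ℕ}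
    (Λ : Matrix (Fin n) (Fin n) ℝ) (hΛ : Λ.IsSymm) (q : Fin n → ℝ) (c : ℝ) :
    (∀ x : Fin n → ℝ, 0 ≤ x ⬝ᵥ Λ.mulVec x + q ⬝ᵥ x + c) ↔
      (blockMx Λ ((1 / 2 : ℝ) • q) c).PosSemidef := by
  have hform (x : Fin n → ℝ) (t : ℝ) :
      Sum.elim x (fun _ => t) ⬝ᵥ blockMx Λ ((1 / 2 : ℝ) • q) c *ᵥ Sum.elim x (fun _ => t)
        = c * (t * t) + (q ⬝ᵥ x) * t + x ⬝ᵥ Λ *ᵥ x := by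
    rw [blockMx.sumElim_dotProduct_mulVec_sumElim, smul_dotProduct, smul_eq_mul]
    ring
  have hscale (x : Fin n → ℝ) (s : ℝ) :
      (s • x) ⬝ᵥ Λ *ᵥ (s • x) + q ⬝ᵥ (s • x) + c
        = x ⬝ᵥ Λ *ᵥ x * (s * s) + (q ⬝ᵥ x) * s + c := by
    simp only [mulVec_smul, dotProduct_smul, smul_dotProduct, smul_eq_mul]
    ring
  rw [posSemidef_iff_dotProduct_mulVec, isHermitian_iff_isSymm]
  simp only [star_trivial]
  constructor
  · refine fun h => ⟨blockMx.isSymm hΛ _ c, fun z => ?_⟩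
    obtain ⟨x, t, rfl⟩ : ∃ x t, z = Sum.elim x fun _ => t :=
      ⟨z ∘ Sum.inl, z (Sum.inr ()), by ext (i | ⟨⟩) <;> rfl⟩
    rw [hform]
    exact quadratic_reverse_nonneg (fun s => hscale x s ▸ h (s • x)) t
  · intro h x
    linarith [hform x 1, h.2 (Sum.elim x fun _ => 1)]

/-- For symmetric `Λ`, the quadratic `xᵀΛx + qᵀx + c` is nonnegative
on all of `ℝⁿ` iff the block matrix `[Λ, q/2; qᵀ/2, c]` is positive semidefinite. -/
theorem quadratic_nonneg_iff_blockMatrix_posSemidef {n : ℕ} (hn : 1 ≤ n)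
    (Λ : Matrix (Fin n) (Fin n) ℝ) (hΛ : Λ.IsSymm) (q : Fin n → ℝ) (c : ℝ) :
    (∀ x : Fin n → ℝ, 0 ≤ x ⬝ᵥ Λ.mulVec x + q ⬝ᵥ x + c) ↔
      (blockMx Λ ((1 / 2 : ℝ) • q) c).PosSemidef :=
  quadratic_nonneg_iff_blockMatrix_posSemidef_general Λ hΛ q c
end
end

section
/- Let n ≥ 1, let Y = {x̂ + Aζ : ζ ∈ ℝⁿ, ‖ζ‖_p ≤ √γ̄} be a core set with x̂ ∈ ℝⁿ, A ∈ ℝ^{n×n}, γ̄ > 0, p ∈ [1,∞], and let q be the conjugate exponent (1/p + 1/q = 1). Let Λ ∈ ℝ^{n×n} be symmetric positive semidefinite, q₀ ∈ ℝⁿ, κ ∈ ℝ and c ≥ 0. Then the semi-infinite constraint 'xᵀΛx + q₀ᵀx + κ + c · min_{x'∈Y} ‖x − x'‖_p ≥ 0 for all x ∈ ℝⁿ' holds if and only if there exists v ∈ ℝⁿ with ‖v‖_q ≤ c such that the (n+1)×(n+1) block matrix [Λ, ½(v + q₀); ½(v + q₀)ᵀ, κ − x̂ᵀv − √γ̄‖Aᵀv‖_q]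 is positive semidefinite. -/
open Matrix MeasureTheory ENNReal

noncomputable section

/-!
For `v ∈ ℝⁿ`, the support function of the core set is `σ_Y(v) = x̂ᵀv + √γ̄ ‖Aᵀv‖_q`
(Hölder's inequality, with equality attained), and since `Λ ⪰ 0` the block matrix is positive
semidefinite iff `φ(x) + vᵀx − σ_Y(v) ≥ 0` for all `x`, where `φ(x) = xᵀΛx + q₀ᵀx + κ`.
If `‖v‖_q ≤ c` then `vᵀx − σ_Y(v) ≤ vᵀ(x − y) ≤ c ‖x − y‖_p` for every `y ∈ Y`, which gives the
semi-infinite constraint. Conversely, if the constraint holds, the convex set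
`{(x − y, s) : y ∈ Y, φ(x) ≤ s}` misses the open convex cone `{(u, t) : t + c ‖u‖_p < 0}`;
a separating hyperplane, normalised in its `t`-coordinate, is `(u, t) ↦ vᵀu + t` for some `v`
with `vᵀu ≤ c ‖u‖_p` (so `‖v‖_q ≤ c`) and `φ(x) + vᵀ(x − y) ≥ 0` on `ℝⁿ × Y`.
-/

section PNorm

variable {ι : Type*} [Fintype ι] {p : ℝ≥0∞}

lemma pNormE_nonneg (p : ℝ≥0∞) (x : ι → ℝ) : 0 ≤ pNormE p x := by
  unfold pNormE
  split_ifs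
  · exact Real.iSup_nonneg fun i => abs_nonneg _
  · positivity

lemma pNormE_top (x : ι → ℝ) : pNormE ∞ x = ⨆ i, |x i| := if_pos rfl

lemma pNormE_one (x : ι → ℝ) : pNormE 1 x = ∑ i, |x i| := by simp [pNormE]

lemma pNormE_of_ne_top (hp : p ≠ ∞) (x : ι → ℝ) :
    pNormE p x = (∑ i, |x i| ^ p.toReal) ^ (1 / p.toReal) := if_neg hp

lemma abs_le_pNormE_top (x : ι → ℝ) (i : ι) : |x i| ≤ pNormE ∞ x :=
  pNormE_top x ▸ le_ciSup (f := fun i => |x i|) (Finite.bddAbove_range _) i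

lemma pNormE_eq_norm [Fact (1 ≤ p)] (x : ι → ℝ) : pNormE p x = ‖WithLp.toLp p x‖ := by
  rcases eq_or_ne p ∞ with rfl | hp
  · simp [pNormE_top, PiLp.norm_eq_ciSup]
  · have hp₀ : 0 < p.toReal := ENNReal.toReal_pos (zero_lt_one.trans_le Fact.out).ne' hp
    rw [pNormE_of_ne_top hp, PiLp.norm_eq_sum hp₀]
    simp

def pNormESeminorm (p : ℝ≥0∞) [Fact (1 ≤ p)] : Seminorm ℝ (ι → ℝ) :=
  (normSeminorm ℝ (PiLp p fun _ : ι => ℝ)).comp (WithLp.linearEquiv p ℝ (ι → ℝ)).symm.toLinearMap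

@[simp]
lemma pNormESeminorm_apply [Fact (1 ≤ p)] (x : ι → ℝ) : pNormESeminorm p x = pNormE p x :=
  (pNormE_eq_norm x).symm

lemma continuous_pNormESeminorm [Fact (1 ≤ p)] : Continuous (pNormESeminorm p : (ι → ℝ) → ℝ) :=
  show Continuous fun x => ‖WithLp.toLp p x‖ from
    continuous_norm.comp (PiLp.continuous_toLp p fun _ : ι => ℝ)

lemma pNormE_zero [Fact (1 ≤ p)] : pNormE p (0 : ι → ℝ) = 0 := by
  simp [pNormE_eq_norm]

lemma pNormE_pos [Fact (1 ≤ p)] {x : ι → ℝ} (hx : x ≠ 0) : 0 < pNormE p x := by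
  simpa [pNormE_eq_norm] using hx

end PNorm

section Holder

variable {ι : Type*} [Fintype ι] {p q : ℝ≥0∞}

lemma dotProduct_le_pNormE_one_mul_top (v w : ι → ℝ) : v ⬝ᵥ w ≤ pNormE 1 v * pNormE ∞ w := by
  rw [pNormE_one, Finset.sum_mul]
  refine Finset.sum_le_sum fun i _ => ?_
  calc v i * w i ≤ |v i| * |w i| := (le_abs_self _).trans (abs_mul _ _).le
    _ ≤ |v i| * pNormE ∞ w := by gcongr; exact abs_le_pNormE_top w i

theorem dotProduct_le_pNormE_mul_pNormE [p.HolderConjugate q] (v w : ι → ℝ) :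
    v ⬝ᵥ w ≤ pNormE p v * pNormE q w := by
  rcases eq_or_ne p ∞ with rfl | hp
  · obtain rfl : q = 1 := (ENNReal.HolderConjugate.eq_top_iff_eq_one ∞ q).1 rfl
    rw [dotProduct_comm, mul_comm]
    exact dotProduct_le_pNormE_one_mul_top w v
  rcases eq_or_ne q ∞ with rfl | hq
  · obtain rfl : p = 1 := (ENNReal.HolderConjugate.eq_top_iff_eq_one ∞ p).1 rfl
    exact dotProduct_le_pNormE_one_mul_top v w
  rw [pNormE_of_ne_top hp, pNormE_of_ne_top hq]
  exact Real.inner_le_Lp_mul_Lq _ v w (ENNReal.HolderConjugate.toReal_of_ne_top hp hq)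

lemma abs_sign_le_one (x : ℝ) : |(SignType.sign x : ℝ)| ≤ 1 := by
  rcases SignType.sign x with _ | _ | _ <;> simp

lemma exists_pNormE_one_le_one_dotProduct_eq {w : ι → ℝ} (hw : w ≠ 0) :
    ∃ ζ : ι → ℝ, pNormE 1 ζ ≤ 1 ∧ w ⬝ᵥ ζ = pNormE ∞ w := by
  classical
  have : Nonempty ι := let ⟨i, _⟩ := Function.ne_iff.1 hw; ⟨i⟩
  obtain ⟨j, hj⟩ := Finite.exists_max fun i => |w i|
  refine ⟨Pi.single j (SignType.sign (w j) : ℝ), ?_, ?_⟩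
  · simpa [pNormE_one, apply_ite, Pi.single_apply] using abs_sign_le_one (w j)
  · rw [dotProduct_single, self_mul_sign, pNormE_top]
    exact le_antisymm (le_ciSup (f := fun i => |w i|) (Finite.bddAbove_range _) j) (ciSup_le hj)

lemma exists_pNormE_top_le_one_dotProduct_eq (w : ι → ℝ) :
    ∃ ζ : ι → ℝ, pNormE ∞ ζ ≤ 1 ∧ w ⬝ᵥ ζ = pNormE 1 w :=
  ⟨fun i => SignType.sign (w i),
    pNormE_top (ι := ι) _ ▸ Real.iSup_le (fun i => abs_sign_le_one _) zero_le_one,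
    by simp [pNormE_one, dotProduct, self_mul_sign]⟩

lemma exists_pNormE_le_one_dotProduct_eq_of_ne_top [p.HolderConjugate q] (hp : p ≠ ∞)
    (hq : q ≠ ∞) {w : ι → ℝ} (hw : w ≠ 0) :
    ∃ ζ : ι → ℝ, pNormE p ζ ≤ 1 ∧ w ⬝ᵥ ζ = pNormE q w := by
  have hpq := ENNReal.HolderConjugate.toReal_of_ne_top hp hq
  have : Fact (1 ≤ q) := ⟨ENNReal.HolderConjugate.one_le q p⟩
  have hNq : pNormE q w ^ q.toReal = ∑ i, |w i| ^ q.toReal := by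
    rw [pNormE_of_ne_top hq, one_div, Real.rpow_inv_rpow (by positivity) hpq.symm.ne_zero]
  set N := pNormE q w
  have hN : 0 < N := pNormE_pos hw
  set a : ι → ℝ := fun i => |w i| / N
  -- `ζᵢ = sign(wᵢ) aᵢ^(q-1)` is the equality case of Hölder's inequality.
  have hsum : ∑ i, a i ^ q.toReal = 1 := by
    simp only [a, Real.div_rpow (abs_nonneg _) hN.le, ← Finset.sum_div, ← hNq]
    exact div_self (by positivity)
  refine ⟨fun i => SignType.sign (w i) * a i ^ (q.toReal - 1), ?_, ?_⟩
  · have hle : ∑ i, |SignType.sign (w i) * a i ^ (q.toReal - 1)| ^ p.toReal ≤ 1 :=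
      (Finset.sum_le_sum fun i _ => calc
        |SignType.sign (w i) * a i ^ (q.toReal - 1)| ^ p.toReal
            ≤ (a i ^ (q.toReal - 1)) ^ p.toReal := by
          gcongr
          rw [abs_mul, abs_of_nonneg (by positivity : 0 ≤ a i ^ (q.toReal - 1))]
          exact mul_le_of_le_one_left (by positivity) (abs_sign_le_one _)
        _ = a i ^ q.toReal := by
          rw [← Real.rpow_mul (by positivity), hpq.symm.sub_one_mul_conj]).trans hsum.le
    rw [pNormE_of_ne_top hp]
    exact Real.rpow_le_one (by positivity) hle (by simp [hpq.nonneg])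
  · calc w ⬝ᵥ (fun i => SignType.sign (w i) * a i ^ (q.toReal - 1))
        = ∑ i, N * a i ^ q.toReal := Finset.sum_congr rfl fun i _ => by
          have hwa : |w i| = N * a i := by simp only [a]; field_simp
          rw [← mul_assoc, self_mul_sign, hwa, mul_assoc, ← Real.rpow_one_add' (by positivity)
            (by simpa using hpq.symm.ne_zero), add_sub_cancel]
      _ = N := by rw [← Finset.mul_sum, hsum, mul_one]

theorem exists_pNormE_le_one_dotProduct_eq [p.HolderConjugate q] (w : ι → ℝ) :
    ∃ ζ : ι → ℝ, pNormE p ζ ≤ 1 ∧ w ⬝ᵥ ζ = pNormE q w := by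
  have : Fact (1 ≤ p) := ⟨ENNReal.HolderConjugate.one_le p q⟩
  have : Fact (1 ≤ q) := ⟨ENNReal.HolderConjugate.one_le q p⟩
  rcases eq_or_ne w 0 with rfl | hw
  · exact ⟨0, by simp [pNormE_zero], by simp [pNormE_zero]⟩
  rcases eq_or_ne p ∞ with rfl | hp
  · obtain rfl : q = 1 := (ENNReal.HolderConjugate.eq_top_iff_eq_one ∞ q).1 rfl
    exact exists_pNormE_top_le_one_dotProduct_eq w
  rcases eq_or_ne q ∞ with rfl | hq
  · obtain rfl : p = 1 := (ENNReal.HolderConjugate.eq_top_iff_eq_one ∞ p).1 rfl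
    exact exists_pNormE_one_le_one_dotProduct_eq hw
  exact exists_pNormE_le_one_dotProduct_eq_of_ne_top hp hq hw

theorem pNormE_le_of_forall_dotProduct_le [p.HolderConjugate q] {v : ι → ℝ} {c : ℝ} (hc : 0 ≤ c)
    (h : ∀ u, v ⬝ᵥ u ≤ c * pNormE p u) : pNormE q v ≤ c := by
  obtain ⟨ζ, hζ, hvζ⟩ := exists_pNormE_le_one_dotProduct_eq (p := p) (q := q) v
  calc pNormE q v = v ⬝ᵥ ζ := hvζ.symm
    _ ≤ c * pNormE p ζ := h ζ
    _ ≤ c := mul_le_of_le_one_right hc hζ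

end Holder

section Block

variable {ι : Type*} [Fintype ι]

lemma sumElim_dotProduct_blockMx_mulVec (Λ : Matrix ι ι ℝ) (β : ι → ℝ) (c : ℝ) (x : ι → ℝ)
    (t : Unit → ℝ) :
    Sum.elim x t ⬝ᵥ blockMx Λ β c *ᵥ Sum.elim x t
      = x ⬝ᵥ Λ *ᵥ x + 2 * t () * (β ⬝ᵥ x) + c * t () ^ 2 := by
  rw [blockMx, fromBlocks_mulVec, sumElim_dotProduct_sumElim]
  simp only [Sum.elim_comp_inl, Sum.elim_comp_inr]
  have hβt : (of fun i (_ : Unit) => β i) *ᵥ t = t () • β := by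
    ext; simp [mulVec, dotProduct, mul_comm]
  have hβx : (of fun (_ : Unit) j => β j) *ᵥ x = fun _ => β ⬝ᵥ x := by
    ext; simp [mulVec]
  have hct : (of fun (_ : Unit) (_ : Unit) => c) *ᵥ t = fun _ => c * t () := by
    ext; simp [mulVec, dotProduct]
  rw [hβt, hβx, hct, dotProduct_add, dotProduct_add, dotProduct_smul, dotProduct_comm x β]
  simp [dotProduct]
  ring

theorem posSemidef_blockMx_iff {Λ : Matrix ι ι ℝ} (hΛ : Λ.PosSemidef) (β : ι → ℝ) (c : ℝ) :
    (blockMx Λ β c).PosSemidef ↔ ∀ x, 0 ≤ x ⬝ᵥ Λ *ᵥ x + 2 * (β ⬝ᵥ x) + c := by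
  constructor
  · intro h x
    simpa [sumElim_dotProduct_blockMx_mulVec] using h.dotProduct_mulVec_nonneg (Sum.elim x 1)
  intro h
  refine .of_dotProduct_mulVec_nonneg (hΛ.isHermitian.fromBlocks (by ext; simp) (by ext; simp))
    fun y => ?_
  rw [star_trivial, ← Sum.elim_comp_inl_inr y, sumElim_dotProduct_blockMx_mulVec]
  set x := y ∘ Sum.inl
  set t := (y ∘ Sum.inr) ()
  rcases eq_or_ne t 0 with ht | ht
  · simpa [ht] using hΛ.dotProduct_mulVec_nonneg x
  have hscale : x ⬝ᵥ Λ *ᵥ x + 2 * t * (β ⬝ᵥ x) + c * t ^ 2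
      = t ^ 2 * ((t⁻¹ • x) ⬝ᵥ Λ *ᵥ (t⁻¹ • x) + 2 * (β ⬝ᵥ t⁻¹ • x) + c) := by
    simp only [mulVec_smul, dotProduct_smul, smul_dotProduct, smul_eq_mul]
    field_simp
  rw [hscale]
  exact mul_nonneg (sq_nonneg t) (h _)

lemma posSemidef_blockMx_half_smul_add_iff {Λ : Matrix ι ι ℝ} (hΛ : Λ.PosSemidef) (v q₀ : ι → ℝ)
    (κ s : ℝ) :
    (blockMx Λ ((1 / 2 : ℝ) • (v + q₀)) (κ - s)).PosSemidef ↔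
      ∀ x, 0 ≤ x ⬝ᵥ Λ *ᵥ x + q₀ ⬝ᵥ x + κ + (v ⬝ᵥ x - s) := by
  rw [posSemidef_blockMx_iff hΛ]
  refine forall_congr' fun x => ?_
  rw [smul_dotProduct, add_dotProduct, smul_eq_mul]
  ring_nf

end Block

lemma Matrix.PosSemidef.convexOn_dotProduct_mulVec {ι : Type*} [Fintype ι] {Λ : Matrix ι ι ℝ}
    (hΛ : Λ.PosSemidef) : ConvexOn ℝ Set.univ fun x : ι → ℝ => x ⬝ᵥ Λ *ᵥ x := by
  refine ⟨convex_univ, fun x _ y _ a b ha hb hab => ?_⟩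
  obtain rfl : b = 1 - a := by linarith
  have hxy : 0 ≤ (x - y) ⬝ᵥ Λ *ᵥ (x - y) := by
    simpa using hΛ.dotProduct_mulVec_nonneg (x - y)
  simp only [mulVec_add, mulVec_sub, mulVec_smul, dotProduct_add, dotProduct_sub, add_dotProduct,
    sub_dotProduct, dotProduct_smul, smul_dotProduct, smul_eq_mul] at hxy ⊢
  nlinarith [mul_nonneg ha hb]

open scoped Pointwise in
theorem exists_dual_le_seminorm_of_nonneg_add_seminorm {E : Type*} [AddCommGroup E] [Module ℝ E]
    [TopologicalSpace E] [IsTopologicalAddGroup E] [ContinuousSMul ℝ E] {N : Seminorm ℝ E}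
    (hN : Continuous N) {c : ℝ} (hc : 0 ≤ c) {φ : E → ℝ} (hφ : ConvexOn ℝ Set.univ φ) {Y : Set E}
    (hY : Convex ℝ Y) (hYne : Y.Nonempty) (h : ∀ x, ∀ y ∈ Y, 0 ≤ φ x + c * N (x - y)) :
    ∃ f : StrongDual ℝ E, (∀ u, f u ≤ c * N u) ∧ ∀ x, ∀ y ∈ Y, 0 ≤ φ x + f (x - y) := by
  -- `S = {(x - y, s) | φ x ≤ s, y ∈ Y}`
  set S : Set (E × ℝ) := {z : E × ℝ | z.1 ∈ Set.univ ∧ φ z.1 ≤ z.2} + (-Y) ×ˢ ({0} : Set ℝ)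
  set D : Set (E × ℝ) := {z | z.2 + c * N z.1 < 0}
  have hS : Convex ℝ S := hφ.convex_epigraph.add (hY.neg.prod (convex_singleton 0))
  have hD : Convex ℝ D := by
    have : ConvexOn ℝ Set.univ fun z : E × ℝ => z.2 + c * N z.1 :=
      ((LinearMap.snd ℝ E ℝ).convexOn convex_univ).add
        ((N.convexOn.comp_linearMap (LinearMap.fst ℝ E ℝ)).smul hc)
    simpa using this.convex_lt 0
  have hDopen : IsOpen D := isOpen_lt (by fun_prop) continuous_const
  have hDS : Disjoint D S := by
    rw [Set.disjoint_left]
    rintro _ hzD ⟨⟨x, s⟩, ⟨-, hxs⟩, ⟨y, t⟩, ⟨hy, rfl⟩, rfl⟩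
    have hxy := h x (-y) hy
    rw [sub_neg_eq_add] at hxy
    change s + 0 + c * N (x + y) < 0 at hzD
    change φ x ≤ s at hxs
    linarith
  obtain ⟨F, u₀, hFD, hFS⟩ := geometric_hahn_banach_open hD hDopen hS hDS
  set g : StrongDual ℝ E := F.comp (.inl ℝ E ℝ)
  set σ := F (0, 1)
  have hF : ∀ u t, F (u, t) = g u + t * σ := fun u t => by
    rw [← F.comp_inl_add_comp_inr, ← smul_eq_mul, ← map_smul]
    simp [g]
  replace hFD : ∀ u t, t + c * N u < 0 → g u + t * σ < u₀ := fun u t ht =>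
    hF u t ▸ hFD (u, t) ht
  replace hFS : ∀ x, ∀ y ∈ Y, u₀ ≤ g (x - y) + φ x * σ := fun x y hy =>
    hF .. ▸ hFS (x - y, φ x)
      ⟨(x, φ x), ⟨trivial, le_rfl⟩, (-y, 0), ⟨by simpa, rfl⟩, by simp [sub_eq_add_neg]⟩
  obtain ⟨y₀, hy₀⟩ := hYne
  have hσ : 0 < σ := by
    have h₁ := hFS y₀ y₀ hy₀
    have h₂ := hFD 0 (min (φ y₀) 0 - 1) (by simp)
    simp only [sub_self, map_zero, zero_add] at h₁ h₂
    have h₃ : 0 < φ y₀ - (min (φ y₀) 0 - 1) := by linarith [min_le_left (φ y₀) 0]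
    by_contra! hσ
    nlinarith [mul_nonneg h₃.le (neg_nonneg.2 hσ)]
  have hu₀ : 0 ≤ u₀ := by
    by_contra! hu₀
    have := hFD 0 (u₀ / σ) (by simpa using div_neg_of_neg_of_pos hu₀ hσ)
    rw [map_zero, zero_add, div_mul_cancel₀ _ hσ.ne'] at this
    exact lt_irrefl _ this
  have hg : ∀ u, g u ≤ σ * (c * N u) := by
    -- otherwise `F ≥ u₀` at the point `(r • u, -r c N u - 1)` of `D`, for `r` large
    intro u
    by_contra! hlt
    set r := (u₀ + σ) / (g u - σ * (c * N u))
    have hr : 0 < r := div_pos (by linarith) (by linarith)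
    have hr' : r * (g u - σ * (c * N u)) = u₀ + σ := div_mul_cancel₀ _ (by linarith)
    have := hFD (r • u) (-(r * (c * N u)) - 1)
      (by rw [map_smul_eq_mul, Real.norm_of_nonneg hr.le]; linarith)
    rw [map_smul, smul_eq_mul] at this
    nlinarith
  refine ⟨σ⁻¹ • g, fun u => ?_, fun x y hy => ?_⟩
  · rw [_root_.smul_apply, smul_eq_mul, inv_mul_le_iff₀ hσ]
    exact hg u
  · have := mul_nonneg (inv_nonneg.2 hσ.le) (hu₀.trans (hFS x y hy))
    rwa [mul_add, mul_comm (φ x), ← mul_assoc, inv_mul_cancel₀ hσ.ne', one_mul, add_comm] at this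

section CoreSet

variable {n : ℕ} {xhat : Fin n → ℝ} {A : Matrix (Fin n) (Fin n) ℝ} {γbar : ℝ} {p q : ℝ≥0∞}

lemma center_mem_coreSetE [Fact (1 ≤ p)] : xhat ∈ coreSetE xhat A γbar p :=
  ⟨0, by simp [pNormE_zero], by simp⟩

lemma convex_coreSetE [Fact (1 ≤ p)] : Convex ℝ (coreSetE xhat A γbar p) := by
  rintro _ ⟨ζ₁, h₁, rfl⟩ _ ⟨ζ₂, h₂, rfl⟩ a b ha hb hab
  refine ⟨a • ζ₁ + b • ζ₂, ?_, ?_⟩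
  · calc pNormE p (a • ζ₁ + b • ζ₂) ≤ a * pNormE p ζ₁ + b * pNormE p ζ₂ := by
          simpa using (pNormESeminorm p).convexOn.2 (Set.mem_univ ζ₁) (Set.mem_univ ζ₂) ha hb hab
      _ ≤ a * √γbar + b * √γbar := by gcongr
      _ = √γbar := by rw [← add_mul, hab, one_mul]
  · rw [mulVec_add, mulVec_smul, mulVec_smul]
    linear_combination (norm := module) hab • xhat

theorem isGreatest_dotProduct_coreSetE [p.HolderConjugate q] (v : Fin n → ℝ) :
    IsGreatest ((v ⬝ᵥ ·) '' coreSetE xhat A γbar p)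
      (xhat ⬝ᵥ v + √γbar * pNormE q (Aᵀ *ᵥ v)) := by
  have : Fact (1 ≤ p) := ⟨ENNReal.HolderConjugate.one_le p q⟩
  have hAv : ∀ ζ, v ⬝ᵥ A *ᵥ ζ = Aᵀ *ᵥ v ⬝ᵥ ζ := fun ζ => by
    rw [dotProduct_mulVec, mulVec_transpose]
  refine ⟨?_, ?_⟩
  · obtain ⟨ζ, hζ, hζv⟩ := exists_pNormE_le_one_dotProduct_eq (p := p) (q := q) (Aᵀ *ᵥ v)
    refine ⟨xhat + A *ᵥ (√γbar • ζ), ⟨√γbar • ζ, ?_, rfl⟩, ?_⟩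
    · rw [← pNormESeminorm_apply, map_smul_eq_mul, pNormESeminorm_apply, Real.norm_of_nonneg
        (Real.sqrt_nonneg _)]
      exact mul_le_of_le_one_right (Real.sqrt_nonneg _) hζ
    · simp only [dotProduct_add, hAv, dotProduct_smul, hζv, dotProduct_comm v xhat, smul_eq_mul]
  · rintro _ ⟨_, ⟨ζ, hζ, rfl⟩, rfl⟩
    dsimp only
    rw [dotProduct_add, hAv, dotProduct_comm v xhat]
    gcongr
    calc Aᵀ *ᵥ v ⬝ᵥ ζ ≤ pNormE q (Aᵀ *ᵥ v) * pNormE p ζ := dotProduct_le_pNormE_mul_pNormE _ _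
      _ ≤ pNormE q (Aᵀ *ᵥ v) * √γbar := by gcongr; exact pNormE_nonneg q _
      _ = √γbar * pNormE q (Aᵀ *ᵥ v) := mul_comm _ _

end CoreSet

section Dist

variable {n : ℕ} {p q : ℝ≥0∞} {Y : Set (Fin n → ℝ)} {x y : Fin n → ℝ}

lemma distToSet_le (hy : y ∈ Y) : distToSet p Y x ≤ pNormE p (x - y) :=
  csInf_le ⟨0, by rintro _ ⟨y, -, rfl⟩; exact pNormE_nonneg p _⟩ ⟨y, hy, rfl⟩

lemma le_mul_distToSet {b c : ℝ} (hc : 0 ≤ c) (hY : Y.Nonempty)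
    (h : ∀ y ∈ Y, b ≤ c * pNormE p (x - y)) : b ≤ c * distToSet p Y x := by
  rcases hc.eq_or_lt with rfl | hc
  · obtain ⟨y, hy⟩ := hY
    simpa using h y hy
  rw [← div_le_iff₀' hc]
  exact le_csInf (hY.image _) fun _ ⟨y, hy, hxy⟩ => hxy ▸ (div_le_iff₀' hc).2 (h y hy)

theorem dotProduct_sub_le_mul_distToSet [p.HolderConjugate q] (hY : Y.Nonempty) {v : Fin n → ℝ}
    {s c : ℝ} (hs : ∀ y ∈ Y, v ⬝ᵥ y ≤ s) (hv : pNormE q v ≤ c) (x : Fin n → ℝ) :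
    v ⬝ᵥ x - s ≤ c * distToSet p Y x :=
  le_mul_distToSet ((pNormE_nonneg q v).trans hv) hY fun y hy => calc
    v ⬝ᵥ x - s ≤ v ⬝ᵥ (x - y) := by rw [dotProduct_sub]; linarith [hs y hy]
    _ ≤ pNormE q v * pNormE p (x - y) := dotProduct_le_pNormE_mul_pNormE _ _
    _ ≤ c * pNormE p (x - y) := by gcongr; exact pNormE_nonneg p _

end Dist

theorem semiInfinite_constraint_iff_sdp_general {n : ℕ}
    (xhat : Fin n → ℝ) (A : Matrix (Fin n) (Fin n) ℝ)
    (γbar : ℝ)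
    (p q : ℝ≥0∞) (hpq : 1 / p + 1 / q = 1)
    (Λ : Matrix (Fin n) (Fin n) ℝ) (hΛ : Λ.PosSemidef)
    (q₀ : Fin n → ℝ) (κ c : ℝ) (hc : 0 ≤ c) :
    (∀ x : Fin n → ℝ,
        0 ≤ x ⬝ᵥ Λ.mulVec x + q₀ ⬝ᵥ x + κ
          + c * distToSet p (coreSetE xhat A γbar p) x) ↔
      ∃ v : Fin n → ℝ, pNormE q v ≤ c ∧
        (blockMx Λ ((1 / 2 : ℝ) • (v + q₀))
          (κ - xhat ⬝ᵥ v - Real.sqrt γbar * pNormE q (Aᵀ.mulVec v))).PosSemidef := by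
  have : p.HolderConjugate q := ENNReal.holderConjugate_iff.2 (by simpa only [one_div] using hpq)
  have : Fact (1 ≤ p) := ⟨ENNReal.HolderConjugate.one_le p q⟩
  have hY : (coreSetE xhat A γbar p).Nonempty := ⟨xhat, center_mem_coreSetE⟩
  have hσY := isGreatest_dotProduct_coreSetE (xhat := xhat) (A := A) (γbar := γbar)
    (p := p) (q := q)
  simp only [sub_sub, posSemidef_blockMx_half_smul_add_iff hΛ]
  constructor
  · intro H
    have hφ : ConvexOn ℝ Set.univ fun x : Fin n → ℝ => x ⬝ᵥ Λ *ᵥ x + q₀ ⬝ᵥ x + κ :=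
      (hΛ.convexOn_dotProduct_mulVec.add
        ((dotProductEquiv ℝ (Fin n) q₀).convexOn convex_univ)).add_const κ
    obtain ⟨f, hfc, hf⟩ := exists_dual_le_seminorm_of_nonneg_add_seminorm
      (continuous_pNormESeminorm (p := p)) hc hφ convex_coreSetE hY fun x y hy => by
        rw [pNormESeminorm_apply]
        linarith [H x, mul_le_mul_of_nonneg_left (distToSet_le (p := p) (x := x) hy) hc]
    set v := (dotProductEquiv ℝ (Fin n)).symm f.toLinearMap
    have hv : ∀ u, f u = v ⬝ᵥ u := fun u =>
      (LinearMap.congr_fun ((dotProductEquiv ℝ (Fin n)).apply_symm_apply f.toLinearMap) u).symm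
    obtain ⟨y, hy, hvy⟩ := (hσY v).1
    refine ⟨v, pNormE_le_of_forall_dotProduct_le hc fun u => by simpa [hv] using hfc u,
      fun x => ?_⟩
    have := hf x y hy
    rw [hv, dotProduct_sub] at this
    linarith
  · rintro ⟨v, hv, hPSD⟩ x
    linarith [hPSD x, dotProduct_sub_le_mul_distToSet (p := p) hY
      (fun y hy => (hσY v).2 (Set.mem_image_of_mem _ hy)) hv x]

/-- The semi-infinite constraint
`xᵀΛx + q₀ᵀx + κ + c·min_{x'∈Y}‖x − x'‖_p ≥ 0 ∀x` for a core set
`Y = {x̂ + Aζ : ‖ζ‖_p ≤ √γ̄}` holds iff there is `v` with `‖v‖_q ≤ c` such that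
`[Λ, ½(v + q₀); ½(v + q₀)ᵀ, κ − x̂ᵀv − √γ̄‖Aᵀv‖_q] ⪰ 0`. -/
theorem semiInfinite_constraint_iff_sdp {n : ℕ} (hn : 1 ≤ n)
    (xhat : Fin n → ℝ) (A : Matrix (Fin n) (Fin n) ℝ)
    (γbar : ℝ) (hγbar : 0 < γbar)
    (p q : ℝ≥0∞) (hp : 1 ≤ p) (hq : 1 ≤ q) (hpq : 1 / p + 1 / q = 1)
    (Λ : Matrix (Fin n) (Fin n) ℝ) (hΛ : Λ.PosSemidef)
    (q₀ : Fin n → ℝ) (κ c : ℝ) (hc : 0 ≤ c) :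
    (∀ x : Fin n → ℝ,
        0 ≤ x ⬝ᵥ Λ.mulVec x + q₀ ⬝ᵥ x + κ
          + c * distToSet p (coreSetE xhat A γbar p) x) ↔
      ∃ v : Fin n → ℝ, pNormE q v ≤ c ∧
        (blockMx Λ ((1 / 2 : ℝ) • (v + q₀))
          (κ - xhat ⬝ᵥ v - Real.sqrt γbar * pNormE q (Aᵀ.mulVec v))).PosSemidef :=
  semiInfinite_constraint_iff_sdp_general xhat A γbar p q hpq Λ hΛ q₀ κ c hc
end
end
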